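/- arXiv:1210.3571 — 6 statements merged into one kernel-verified Lean document; each statement's English description precedes it below -/
import Mathlib

section
/- Let (R,σ) be a difference ring and I a σ-ideal that is well-mixed (ab∈I implies a·σ(b)∈I). Then the perfect closure of I equals {a ∈ R : a^ν ∈ I for some nonzero ν ∈ ℕ[σ]}, i.e., the set of a such that some product of iterates a·σ(a)^{n₁}·σ²(a)^{n₂}···(with total exponent ≥ 1) lies in I, and this set is a perfect ideal. -/
/-- The action of a difference operator `ν ∈ ℕ[σ]` on an element `a`:
`a^ν = ∏ᵢ σⁱ(a)^{νᵢ}`. -/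
noncomputable def diffOpApply {R : Type*} [CommRing R] (σ : R →+* R)
    (ν : ℕ →₀ ℕ) (a : R) : R :=
  ν.prod fun i k => ((⇑σ)^[i] a) ^ k

/-!
For a well-mixed ideal `I`, a factor `σⁱ(a)` of a product lying in `I` may be replaced by any
`σʲ(a)` with `j ≥ i`. Hence `a^ν ∈ I` forces `σᴰ(a)^{|ν|} ∈ I` once `D` bounds the support of
`ν`, and conversely `σᴰ(a)ⁿ = a^{n·σᴰ}`. So the set in question is
`{a | σᴰ(a) ∈ √I for some D}`, the increasing union of the ideals `(σᴰ)⁻¹(√I)`. Since `√I` is again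
a well-mixed `σ`-ideal, the same description applied to `√I` shows that this ideal is perfect;
minimality is immediate from the description by `a^ν ∈ I`.
-/

section DifferenceRing

variable {R : Type*} [CommRing R] {σ : R →+* R}

theorem diffOpApply_single (i k : ℕ) (a : R) :
    diffOpApply σ (Finsupp.single i k) a = ((⇑σ)^[i] a) ^ k :=
  Finsupp.prod_single_index (pow_zero _)

theorem diffOpApply_add (ν μ : ℕ →₀ ℕ) (a : R) :
    diffOpApply σ (ν + μ) a = diffOpApply σ ν a * diffOpApply σ μ a :=
  Finsupp.prod_add_index' (fun _ => pow_zero _) (fun _ _ _ => pow_add _ _ _)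

theorem iterate_diffOpApply (n : ℕ) (ν : ℕ →₀ ℕ) (a : R) :
    (⇑σ)^[n] (diffOpApply σ ν a) = diffOpApply σ ν ((⇑σ)^[n] a) := by
  rw [← RingHom.coe_pow, diffOpApply, diffOpApply, map_finsuppProd]
  simp only [map_pow, RingHom.coe_pow, ← Function.iterate_add_apply, add_comm n]

namespace Ideal

variable (σ) in
def IsWellMixed (I : Ideal R) : Prop :=
  ∀ a b : R, a * b ∈ I → a * σ b ∈ I

variable (σ) in
def IsPerfect (I : Ideal R) : Prop :=
  ∀ (a : R) (ν : ℕ →₀ ℕ), ν ≠ 0 → diffOpApply σ ν a ∈ I → a ∈ I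

variable {I : Ideal R}

namespace IsWellMixed

theorem mul_iterate_mem (hI : I.IsWellMixed σ) {x y : R} (h : x * y ∈ I) (n : ℕ) :
    x * (⇑σ)^[n] y ∈ I := by
  induction n with
  | zero => exact h
  | succ n ih => rw [Function.iterate_succ_apply']; exact hI _ _ ih

theorem mul_pow_iterate_mem (hI : I.IsWellMixed σ) {x y : R} {k : ℕ} (h : x * y ^ k ∈ I)
    (n : ℕ) : x * ((⇑σ)^[n] y) ^ k ∈ I := by
  induction k generalizing x with
  | zero => simpa using h
  | succ k ih =>
    have hshift : x * y ^ k * (⇑σ)^[n] y ∈ I :=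
      hI.mul_iterate_mem (by rwa [pow_succ, ← mul_assoc] at h) n
    have := ih (x := x * (⇑σ)^[n] y) (by rw [mul_right_comm]; exact hshift)
    rwa [mul_assoc, ← pow_succ'] at this

theorem mul_iterate_pow_degree_mem (hI : I.IsWellMixed σ) (a : R) (ν : ℕ →₀ ℕ) :
    ∀ (x : R) (D : ℕ), (∀ i, ν i ≠ 0 → i ≤ D) → x * diffOpApply σ ν a ∈ I →
      x * ((⇑σ)^[D] a) ^ ν.degree ∈ I := by
  induction ν using Finsupp.induction with
  | zero => simp [diffOpApply]
  | single_add i k ν _ hk ih =>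
    intro x D hD h
    have hi : i ≤ D := hD i (by simp [hk])
    have hν : ∀ j, ν j ≠ 0 → j ≤ D := fun j hj => hD j (by simp; omega)
    rw [diffOpApply_add, diffOpApply_single, ← mul_assoc] at h
    have hrest := ih _ D hν h
    rw [mul_right_comm] at hrest
    have hshift := hI.mul_pow_iterate_mem hrest (D - i)
    rw [← Function.iterate_add_apply, Nat.sub_add_cancel hi, mul_assoc, ← pow_add] at hshift
    rwa [map_add, Finsupp.degree_single, add_comm]

theorem exists_iterate_mem_radical (hI : I.IsWellMixed σ) {a : R} {ν : ℕ →₀ ℕ}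
    (h : diffOpApply σ ν a ∈ I) : ∃ D, (⇑σ)^[D] a ∈ I.radical := by
  obtain ⟨D, hD⟩ : ∃ D, ∀ i, ν i ≠ 0 → i ≤ D :=
    ⟨ν.support.sup id, fun i hi => Finset.le_sup (f := id) (Finsupp.mem_support_iff.2 hi)⟩
  exact ⟨D, ν.degree, by simpa using hI.mul_iterate_pow_degree_mem a ν 1 D hD (by simpa)⟩

protected theorem radical (hI : I.IsWellMixed σ) : I.radical.IsWellMixed σ := by
  rintro a b ⟨n, hn⟩
  refine ⟨n, ?_⟩
  rw [mul_pow] at hn ⊢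
  simpa [map_pow] using hI _ _ hn

end IsWellMixed

theorem radical_mapsTo (hσI : ∀ a ∈ I, σ a ∈ I) : ∀ a ∈ I.radical, σ a ∈ I.radical := by
  rintro a ⟨n, hn⟩
  exact ⟨n, by simpa [map_pow] using hσI _ hn⟩

theorem exists_diffOpApply_mem_of_iterate_mem_radical {a : R} {D : ℕ}
    (h : (⇑σ)^[D] a ∈ I.radical) : ∃ ν : ℕ →₀ ℕ, ν ≠ 0 ∧ diffOpApply σ ν a ∈ I := by
  obtain ⟨n, hn⟩ := h
  refine ⟨Finsupp.single D (n + 1), by simp, ?_⟩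
  rw [diffOpApply_single, pow_succ]
  exact I.mul_mem_right _ hn

variable (σ) in
/-- `{a | σᴰ(a) ∈ √I for some D}` when `I` is a `σ`-ideal (the union is then increasing). -/
def eventualRadical (I : Ideal R) : Ideal R :=
  ⨆ D : ℕ, I.radical.comap (σ ^ D)

theorem mem_eventualRadical (hσI : ∀ a ∈ I, σ a ∈ I) {a : R} :
    a ∈ I.eventualRadical σ ↔ ∃ D, (⇑σ)^[D] a ∈ I.radical := by
  have hmono : Monotone fun D : ℕ => I.radical.comap (σ ^ D) := by
    refine monotone_nat_of_le_succ fun D x hx => ?_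
    simp only [mem_comap, RingHom.coe_pow, Function.iterate_succ_apply'] at hx ⊢
    exact radical_mapsTo hσI _ hx
  simp only [eventualRadical, Submodule.mem_iSup_of_directed _ hmono.directed_le, mem_comap,
    RingHom.coe_pow]

theorem mem_eventualRadical_iff_exists_diffOpApply_mem (hσI : ∀ a ∈ I, σ a ∈ I)
    (hI : I.IsWellMixed σ) {a : R} :
    a ∈ I.eventualRadical σ ↔ ∃ ν : ℕ →₀ ℕ, ν ≠ 0 ∧ diffOpApply σ ν a ∈ I := by
  rw [mem_eventualRadical hσI]
  exact ⟨fun ⟨_, h⟩ => exists_diffOpApply_mem_of_iterate_mem_radical h,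
    fun ⟨_, _, h⟩ => hI.exists_iterate_mem_radical h⟩

theorem le_eventualRadical (hσI : ∀ a ∈ I, σ a ∈ I) : I ≤ I.eventualRadical σ :=
  fun _ ha => (mem_eventualRadical hσI).2 ⟨0, le_radical ha⟩

theorem eventualRadical_mapsTo (hσI : ∀ a ∈ I, σ a ∈ I) :
    ∀ a ∈ I.eventualRadical σ, σ a ∈ I.eventualRadical σ := by
  intro a ha
  obtain ⟨D, hD⟩ := (mem_eventualRadical hσI).1 ha
  refine (mem_eventualRadical hσI).2 ⟨D, ?_⟩
  rw [← Function.iterate_succ_apply, Function.iterate_succ_apply']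
  exact radical_mapsTo hσI _ hD

theorem isPerfect_eventualRadical (hσI : ∀ a ∈ I, σ a ∈ I) (hI : I.IsWellMixed σ) :
    (I.eventualRadical σ).IsPerfect σ := by
  intro a ν _ h
  obtain ⟨D, hD⟩ := (mem_eventualRadical hσI).1 h
  rw [iterate_diffOpApply] at hD
  obtain ⟨E, hE⟩ := hI.radical.exists_iterate_mem_radical hD
  rw [radical_idem, ← Function.iterate_add_apply] at hE
  exact (mem_eventualRadical hσI).2 ⟨_, hE⟩

end Ideal

end DifferenceRing

theorem perfect_closure_of_well_mixed_general
    {R : Type*} [CommRing R] (σ : R →+* R)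
    (I : Ideal R)
    (hσI : ∀ a ∈ I, σ a ∈ I)
    (hwm : ∀ a b : R, a * b ∈ I → a * σ b ∈ I) :
    ∃ J : Ideal R,
      (J : Set R) = {a : R | ∃ ν : ℕ →₀ ℕ, ν ≠ 0 ∧ diffOpApply σ ν a ∈ I} ∧
      (∀ a ∈ J, σ a ∈ J) ∧
      (∀ (a : R) (ν : ℕ →₀ ℕ), ν ≠ 0 → diffOpApply σ ν a ∈ J → a ∈ J) ∧
      I ≤ J ∧
      (∀ J' : Ideal R, I ≤ J' → (∀ a ∈ J', σ a ∈ J') →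
        (∀ (a : R) (ν : ℕ →₀ ℕ), ν ≠ 0 → diffOpApply σ ν a ∈ J' → a ∈ J') → J ≤ J') := by
  have hmem : ∀ a, a ∈ I.eventualRadical σ ↔ ∃ ν : ℕ →₀ ℕ, ν ≠ 0 ∧ diffOpApply σ ν a ∈ I :=
    fun _ => I.mem_eventualRadical_iff_exists_diffOpApply_mem hσI hwm
  refine ⟨I.eventualRadical σ, Set.ext hmem, I.eventualRadical_mapsTo hσI,
    I.isPerfect_eventualRadical hσI hwm, I.le_eventualRadical hσI,
    fun J' hIJ' _ hJ' a ha => ?_⟩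
  obtain ⟨ν, hν, h⟩ := (hmem a).1 ha
  exact hJ' a ν hν (hIJ' h)

/-- for a well-mixed `σ`-ideal `I` of a difference ring `(R, σ)`, the
perfect closure of `I` is exactly `{a : a^ν ∈ I for some nonzero ν ∈ ℕ[σ]}`, and this
set is a perfect `σ`-ideal. -/
theorem perfect_closure_of_well_mixed
    {R : Type*} [CommRing R] (σ : R →+* R) (hinj : Function.Injective σ)
    (I : Ideal R)
    (hσI : ∀ a ∈ I, σ a ∈ I)
    (hwm : ∀ a b : R, a * b ∈ I → a * σ b ∈ I) :
    ∃ J : Ideal R,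
      (J : Set R) = {a : R | ∃ ν : ℕ →₀ ℕ, ν ≠ 0 ∧ diffOpApply σ ν a ∈ I} ∧
      (∀ a ∈ J, σ a ∈ J) ∧
      (∀ (a : R) (ν : ℕ →₀ ℕ), ν ≠ 0 → diffOpApply σ ν a ∈ J → a ∈ J) ∧
      I ≤ J ∧
      (∀ J' : Ideal R, I ≤ J' → (∀ a ∈ J', σ a ∈ J') →
        (∀ (a : R) (ν : ℕ →₀ ℕ), ν ≠ 0 → diffOpApply σ ν a ∈ J' → a ∈ J') → J ≤ J') :=
  perfect_closure_of_well_mixed_general σ I hσI hwm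
end

section
/- Let (R,Σ) be a difference ring and f ∈ R. The set D^{(Σ)}(f) = {𝔭 ∈ Spec^{(Σ)}(R) : f ∉ 𝔭} is quasi-compact in the topology induced from the Zariski topology: any cover of D^{(Σ)}(f) by sets D^{(Σ)}(g_i) admits a finite subcover. -/
/-!
Each condition `σ a ∈ 𝔭 ↔ a ∈ 𝔭` cutting out `Spec^{(Σ)}(R)` is a Boolean combination of the
quasi-compact opens `D(a)`, `D(σ a)`, hence clopen in the constructible topology. So
`D^{(Σ)}(f)` is closed in `Spec R` with its constructible topology, which is quasi-compact, and
the constructible topology is finer than the Zariski topology.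
-/

open WithTopology PrimeSpectrum

lemma IsClopen.setOf_iff {X : Type*} [TopologicalSpace X] {p q : X → Prop}
    (hp : IsClopen {x | p x}) (hq : IsClopen {x | q x}) : IsClopen {x | p x ↔ q x} := by
  have h : {x | p x ↔ q x} = {x | p x} ∩ {x | q x} ∪ {x | p x}ᶜ ∩ {x | q x}ᶜ := by
    ext x
    simp only [Set.mem_ofPred_eq, Set.mem_union, Set.mem_inter_iff, Set.mem_compl_iff]
    tauto
  rw [h]
  exact (hp.inter hq).union (hp.compl.inter hq.compl)

namespace WithConstructibleTopology

variable {X : Type*} [TopologicalSpace X]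

lemma continuous_ofTopology [PrespectralSpace X] :
    Continuous (ofTopology : WithConstructibleTopology X → X) :=
  PrespectralSpace.isTopologicalBasis.continuous_iff.2 fun _ hU ↦
    hU.2.isOpen_constructibleTopology_of_isOpen hU.1

lemma isClopen_preimage_ofTopology {s : Set X} (ho : IsOpen s) (hc : IsCompact s) :
    IsClopen (ofTopology ⁻¹' s : Set (WithConstructibleTopology X)) :=
  ⟨isOpen_compl_iff.1 <|
      IsCompact.isOpen_constructibleTopology_of_isClosed (by simpa) ho.isClosed_compl,
    hc.isOpen_constructibleTopology_of_isOpen ho⟩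

end WithConstructibleTopology

namespace PrimeSpectrum

variable {R : Type*} [CommRing R]

/-- `Spec^{(Σ)}(R)`. -/
def differenceSpectrum (Sg : Set (R →+* R)) : Set (PrimeSpectrum R) :=
  {x | ∀ σ ∈ Sg, ∀ a, σ a ∈ x.asIdeal ↔ a ∈ x.asIdeal}

lemma isClopen_setOf_mem_asIdeal (r : R) :
    IsClopen {x : WithConstructibleTopology (PrimeSpectrum R) | r ∈ (ofTopology x).asIdeal} := by
  simpa [Set.compl_def] using (WithConstructibleTopology.isClopen_preimage_ofTopology
    (isOpen_basicOpen (a := r)) (isCompact_basicOpen r)).compl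

lemma isClosed_preimage_differenceSpectrum (Sg : Set (R →+* R)) :
    IsClosed (ofTopology ⁻¹' differenceSpectrum Sg :
      Set (WithConstructibleTopology (PrimeSpectrum R))) := by
  have h : (ofTopology ⁻¹' differenceSpectrum Sg : Set (WithConstructibleTopology _)) =
      ⋂ σ ∈ Sg, ⋂ a, {x | σ a ∈ (ofTopology x).asIdeal ↔ a ∈ (ofTopology x).asIdeal} := by
    ext
    simp [differenceSpectrum]
  rw [h]
  exact isClosed_biInter fun σ _ ↦ isClosed_iInter fun a ↦
    (IsClopen.setOf_iff (isClopen_setOf_mem_asIdeal (σ a))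
      (isClopen_setOf_mem_asIdeal a)).isClosed

lemma isCompact_differenceSpectrum_inter_basicOpen (Sg : Set (R →+* R)) (f : R) :
    IsCompact (differenceSpectrum Sg ∩ basicOpen f) := by
  have hK : IsClosed (ofTopology ⁻¹' (differenceSpectrum Sg ∩ basicOpen f) :
      Set (WithConstructibleTopology (PrimeSpectrum R))) :=
    (isClosed_preimage_differenceSpectrum Sg).inter
      (WithConstructibleTopology.isClopen_preimage_ofTopology isOpen_basicOpen
        (isCompact_basicOpen f)).isClosed
  simpa only [Set.image_preimage_eq _ (ofTopology_surjective _)] using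
    hK.isCompact.image WithConstructibleTopology.continuous_ofTopology

end PrimeSpectrum

open PrimeSpectrum in
theorem D_f_quasiCompact_general
    {R : Type*} [CommRing R] (Sg : Set (R →+* R))
    (f : R) {ι : Type*} (g : ι → R)
    (hcov : ∀ p : Ideal R, p.IsPrime → (∀ σ ∈ Sg, ∀ a : R, σ a ∈ p ↔ a ∈ p) →
      f ∉ p → ∃ i : ι, g i ∉ p) :
    ∃ s : Finset ι, ∀ p : Ideal R, p.IsPrime →
      (∀ σ ∈ Sg, ∀ a : R, σ a ∈ p ↔ a ∈ p) → f ∉ p → ∃ i ∈ s, g i ∉ p := by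
  have hcover : differenceSpectrum Sg ∩ basicOpen f ⊆ ⋃ i, (basicOpen (g i) : Set _) := by
    rintro ⟨p, hp⟩ ⟨hfix, hf⟩
    exact Set.mem_iUnion.2 (hcov p hp hfix hf)
  obtain ⟨s, hs⟩ := (isCompact_differenceSpectrum_inter_basicOpen Sg f).elim_finite_subcover
    _ (fun i ↦ isOpen_basicOpen) hcover
  refine ⟨s, fun p hp hfix hf ↦ ?_⟩
  simpa using @hs ⟨p, hp⟩ ⟨hfix, hf⟩

/-- `D^{(Σ)}(f)` is quasi-compact: any cover of it by basic open sets
`D^{(Σ)}(gᵢ)` admits a finite subcover.  Points of `Spec^{(Σ)}(R)` are primes fixed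
by every `σ ∈ Σ`. -/
theorem D_f_quasiCompact
    {R : Type*} [CommRing R] (Sg : Set (R →+* R))
    (hinj : ∀ σ ∈ Sg, Function.Injective σ)
    (hconj : ∀ σ ∈ Sg, ∀ τ ∈ Sg, ∃ ρ ∈ Sg, (τ : R →+* R).comp ρ = σ.comp τ)
    (f : R) {ι : Type*} (g : ι → R)
    (hcov : ∀ p : Ideal R, p.IsPrime → (∀ σ ∈ Sg, ∀ a : R, σ a ∈ p ↔ a ∈ p) →
      f ∉ p → ∃ i : ι, g i ∉ p) :
    ∃ s : Finset ι, ∀ p : Ideal R, p.IsPrime →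
      (∀ σ ∈ Sg, ∀ a : R, σ a ∈ p ↔ a ∈ p) → f ∉ p → ∃ i ∈ s, g i ∉ p :=
  D_f_quasiCompact_general Sg f g hcov
end

section
/- Let (X,Σ) be a full difference scheme with Σ finite. Then for any point x ∈ X, the orbit of x under the semigroup generated by Σ is finite; in fact if x ∈ X^{τ₁} for some τ₁ ∈ Σ, then the orbit equals O(x) = {σx : σ ∈ Σ}, which has at most |Σ| elements. -/
/-- The orbit of `x` under the semigroup generated by `Sg`: all images of `x` under
nonempty words in `Sg`. -/
def semigroupOrbit {X : Type*} (Sg : Set (X → X)) (x : X) : Set X :=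
  {y | ∃ l : List (X → X), l ≠ [] ∧ (∀ f ∈ l, f ∈ Sg) ∧
    y = l.foldr (fun f z => f z) x}

/-!
If `τ ∈ Σ` fixes `x`, generalised conjugation writes any `σ ∘ ρ` with `σ, ρ ∈ Σ` as `σ' ∘ τ`,
so `σ (ρ x) = σ' (τ x) = σ' x`. Hence `O(x) = {σ x : σ ∈ Σ}` is stable under `Σ`; as it contains
the images of `x` under one-letter words, it contains the whole semigroup orbit.
-/

open Set

section SemigroupOrbit

variable {X : Type*} {S : Set (X → X)} {x : X}

theorem image_eval_subset_semigroupOrbit : (fun σ => σ x) '' S ⊆ semigroupOrbit S x := by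
  rintro _ ⟨σ, hσ, rfl⟩
  exact ⟨[σ], List.cons_ne_nil _ _, by simpa using hσ, rfl⟩

theorem semigroupOrbit_subset_of_mapsTo {T : Set X} (hx : ∀ σ ∈ S, σ x ∈ T)
    (hT : ∀ σ ∈ S, MapsTo σ T T) : semigroupOrbit S x ⊆ T := by
  rintro _ ⟨l, hne, hl, rfl⟩
  induction l with
  | nil => exact absurd rfl hne
  | cons f t ih =>
    have hf : f ∈ S := hl f List.mem_cons_self
    rcases eq_or_ne t [] with rfl | ht
    · exact hx f hf
    · exact hT f hf (ih ht fun g hg => hl g (List.mem_cons_of_mem f hg))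

theorem mapsTo_image_eval_of_fixed {τ : X → X} (hτx : τ x = x)
    (hconj : ∀ σ ∈ S, ∀ ρ ∈ S, ∃ σ' ∈ S, σ' ∘ τ = σ ∘ ρ) (σ : X → X) (hσ : σ ∈ S) :
    MapsTo σ ((fun ρ => ρ x) '' S) ((fun ρ => ρ x) '' S) := by
  rintro _ ⟨ρ, hρ, rfl⟩
  obtain ⟨σ', hσ', hcomp⟩ := hconj σ hσ ρ hρ
  refine ⟨σ', hσ', ?_⟩
  simpa [hτx] using congrFun hcomp x

theorem semigroupOrbit_eq_image_eval_of_fixed {τ : X → X} (hτx : τ x = x)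
    (hconj : ∀ σ ∈ S, ∀ ρ ∈ S, ∃ σ' ∈ S, σ' ∘ τ = σ ∘ ρ) :
    semigroupOrbit S x = (fun σ => σ x) '' S :=
  (semigroupOrbit_subset_of_mapsTo (fun _ => mem_image_of_mem _)
    (mapsTo_image_eval_of_fixed hτx hconj)).antisymm image_eval_subset_semigroupOrbit

end SemigroupOrbit

theorem semigroupOrbit_eq_image_of_full_general
    {X : Type*} (Sg : Set (X → X)) (hfin : Sg.Finite)
    (hfullSurj : ∀ τ ∈ Sg, ∀ τ' ∈ Sg, ∀ ρ ∈ Sg, ∃ σ ∈ Sg, σ ∘ τ' = τ ∘ ρ)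
    (hcover : ∀ x : X, ∃ τ ∈ Sg, τ x = x) :
    ∀ x : X,
      semigroupOrbit Sg x = (fun σ => σ x) '' Sg ∧
      (semigroupOrbit Sg x).Finite ∧
      (semigroupOrbit Sg x).ncard ≤ Sg.ncard := by
  intro x
  obtain ⟨τ, hτ, hτx⟩ := hcover x
  have horbit : semigroupOrbit Sg x = (fun σ => σ x) '' Sg :=
    semigroupOrbit_eq_image_eval_of_fixed hτx fun σ hσ ρ hρ => hfullSurj σ hσ τ hτ ρ hρ
  rw [horbit]
  exact ⟨rfl, hfin.image _, ncard_image_le hfin⟩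

/-- on a full difference scheme `(X, Σ)` with `Σ` finite (every point
fixed by some `τ ∈ Σ`), the semigroup orbit of any point `x` is finite; in fact it
equals `O(x) = {σ x : σ ∈ Σ}`, which has at most `|Σ|` elements. -/
theorem semigroupOrbit_eq_image_of_full
    {X : Type*} (Sg : Set (X → X)) (hfin : Sg.Finite)
    (hregInj : ∀ σ ∈ Sg, ∀ τ₁ ∈ Sg, ∀ τ₂ ∈ Sg, τ₁ ∘ σ = τ₂ ∘ σ → τ₁ = τ₂)
    (hfull : ∀ τ ∈ Sg, ∀ τ' ∈ Sg, ∀ σ ∈ Sg, ∃ ρ ∈ Sg, σ ∘ τ' = τ ∘ ρ)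
    (hfullSurj : ∀ τ ∈ Sg, ∀ τ' ∈ Sg, ∀ ρ ∈ Sg, ∃ σ ∈ Sg, σ ∘ τ' = τ ∘ ρ)
    (hcover : ∀ x : X, ∃ τ ∈ Sg, τ x = x) :
    ∀ x : X,
      semigroupOrbit Sg x = (fun σ => σ x) '' Sg ∧
      (semigroupOrbit Sg x).Finite ∧
      (semigroupOrbit Sg x).ncard ≤ Sg.ncard :=
  semigroupOrbit_eq_image_of_full_general Sg hfin hfullSurj hcover
end

section
/- Let a finite group (G,Σ̃) act on a difference ring (A,Σ) with ΣG = Σ and A an integral domain, and let B = A^G. If σ₁,σ₂ ∈ Σ restrict to the same endomorphism of B, then there exists g ∈ G with σ₂ = σ₁∘g. Hence Σ̄ = Σ/G. -/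
/-!
Extend `σ₁` and `σ₂` to embeddings of the fraction field `K` of `A`. Every `x` is a root of
`∏_{g ∈ G} (X - g x)`, whose coefficients are `G`-invariant, so `σ₂ x` is a root of
`∏_{g ∈ G} (X - σ₁ (g x))`. Hence `σ₂ = σ₁ ∘ τ` for an endomorphism `τ` of `K`, and `τ` fixes
`K^G = Frac(A^G)` because `σ₁` and `σ₂` agree there. By Artin's theorem `τ` is an element of `G`.
-/

/-- The subring of invariants `A^G` of a group of ring automorphisms. -/
def fixedSubring {A : Type*} [CommRing A] (G : Subgroup (A ≃+* A)) : Subring A where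
  carrier := {x | ∀ g ∈ G, g x = x}
  zero_mem' := by intro g hg; simp
  one_mem' := by intro g hg; simp
  add_mem' := by
    intro a b ha hb g hg
    simp only [Set.mem_setOf_eq] at ha hb
    rw [map_add, ha g hg, hb g hg]
  mul_mem' := by
    intro a b ha hb g hg
    simp only [Set.mem_setOf_eq] at ha hb
    rw [map_mul, ha g hg, hb g hg]
  neg_mem' := by
    intro a ha g hg
    simp only [Set.mem_setOf_eq] at ha
    rw [map_neg, ha g hg]

open Polynomial

namespace MulSemiringAction

variable {G R S : Type*} [Group G] [CommRing R] [MulSemiringAction G R] [CommRing S]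

theorem map_charpoly_eq_of_forall_fixed [Fintype G] {φ ψ : R →+* S}
    (h : ∀ x, (∀ g : G, g • x = x) → φ x = ψ x) (x : R) :
    (charpoly G x).map φ = (charpoly G x).map ψ := by
  ext n
  simp only [coeff_map]
  exact h _ (smul_coeff_charpoly x n)

theorem exists_apply_eq_apply_smul_of_forall_fixed [Finite G] [IsDomain S] {φ ψ : R →+* S}
    (h : ∀ x, (∀ g : G, g • x = x) → φ x = ψ x) (x : R) : ∃ g : G, ψ x = φ (g • x) := by
  cases nonempty_fintype G
  have hroot : ((charpoly G x).map ψ).eval (ψ x) = 0 := by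
    rw [eval_map, eval₂_at_apply, eval_charpoly, map_zero]
  rw [← map_charpoly_eq_of_forall_fixed h, charpoly_eq, Polynomial.map_prod, eval_prod,
    Finset.prod_eq_zero_iff] at hroot
  obtain ⟨g, -, hg⟩ := hroot
  exact ⟨g, by simpa [sub_eq_zero] using hg⟩

end MulSemiringAction

theorem RingHom.exists_comp_eq_of_forall_mem_range {R S : Type*} [Ring R] [Ring S]
    {f g : R →+* S} (hf : Function.Injective f) (hg : ∀ x, g x ∈ f.range) :
    ∃ τ : R →+* R, f.comp τ = g :=
  ⟨(RingEquiv.ofLeftInverse (Function.leftInverse_invFun hf)).symm.toRingHom.comp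
      (g.codRestrict f.range hg), by
    ext x
    simp [RingEquiv.ofLeftInverse_symm_apply, Function.invFun_eq (hg x)]⟩

theorem FixedPoints.exists_forall_apply_eq_apply_smul {G K L : Type*} [Group G] [Finite G]
    [Field K] [MulSemiringAction G K] [FaithfulSMul G K] [Field L] {φ ψ : K →+* L}
    (h : ∀ x, (∀ g : G, g • x = x) → φ x = ψ x) : ∃ g : G, ∀ x, ψ x = φ (g • x) := by
  obtain ⟨τ, hτ⟩ : ∃ τ : K →+* K, φ.comp τ = ψ :=
    φ.exists_comp_eq_of_forall_mem_range φ.injective fun x =>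
      let ⟨g, hg⟩ := MulSemiringAction.exists_apply_eq_apply_smul_of_forall_fixed h x
      ⟨g • x, hg.symm⟩
  have hτ_fixed : ∀ x, (∀ g : G, g • x = x) → τ x = x := fun x hx =>
    φ.injective ((RingHom.congr_fun hτ x).trans (h x hx).symm)
  obtain ⟨g, hg⟩ := (FixedPoints.toAlgHom_bijective G K).surjective
    { τ with commutes' := fun r => hτ_fixed r fun g => r.2 g }
  exact ⟨g, fun x => by rw [← hτ]; exact congrArg φ (AlgHom.congr_fun hg x).symm⟩

section FractionRing

variable {G A : Type*} [Group G] [Finite G] [CommRing A] [IsDomain A] [MulSemiringAction G A]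

attribute [local instance] FractionRing.liftAlgebra in
theorem IsFractionRing.ringHom_eq_of_forall_fixed {K L : Type*} [Field K] [Algebra A K]
    [IsFractionRing A K] [MulSemiringAction G K] [SMulDistribClass G A K] [Field L]
    {φ ψ : K →+* L}
    (h : ∀ a : A, (∀ g : G, g • a = a) → φ (algebraMap A K a) = ψ (algebraMap A K a))
    (x : K) (hx : ∀ g : G, g • x = x) : φ x = ψ x := by
  let B := FixedPoints.subring A G
  have : Algebra.IsInvariant B A G := ⟨fun a ha => ⟨⟨a, ha⟩, rfl⟩⟩
  obtain ⟨y, rfl⟩ := (IsFractionRing.isInvariant G B A (FractionRing B) K).isInvariant x hx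
  suffices φ.comp (algebraMap _ K) = ψ.comp (algebraMap _ K) from RingHom.congr_fun this y
  refine IsLocalization.ringHom_ext (nonZeroDivisors B) (RingHom.ext fun b => ?_)
  have hb : algebraMap (FractionRing B) K (algebraMap B _ b) = algebraMap A K b := by
    rw [← IsScalarTower.algebraMap_apply, IsScalarTower.algebraMap_apply B A K]
    rfl
  simpa only [RingHom.comp_apply, hb] using h b b.2

theorem MulSemiringAction.exists_forall_apply_eq_apply_smul_of_injective [FaithfulSMul G A]
    {S : Type*} [CommRing S] [IsDomain S] {φ ψ : A →+* S} (hφ : Function.Injective φ)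
    (hψ : Function.Injective ψ) (h : ∀ a, (∀ g : G, g • a = a) → φ a = ψ a) :
    ∃ g : G, ∀ a, ψ a = φ (g • a) := by
  let := IsFractionRing.mulSemiringAction G A (FractionRing A)
  have := IsFractionRing.faithfulSMul G A (FractionRing A)
  have hS := IsFractionRing.injective S (FractionRing S)
  let φK : FractionRing A →+* FractionRing S :=
    IsFractionRing.lift (g := (algebraMap S _).comp φ) (hS.comp hφ)
  let ψK : FractionRing A →+* FractionRing S :=
    IsFractionRing.lift (g := (algebraMap S _).comp ψ) (hS.comp hψ)
  obtain ⟨g, hg⟩ := FixedPoints.exists_forall_apply_eq_apply_smul (G := G) (φ := φK) (ψ := ψK)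
    (IsFractionRing.ringHom_eq_of_forall_fixed (A := A) fun a ha => by simp [φK, ψK, h a ha])
  refine ⟨g, fun a => hS ?_⟩
  simpa [φK, ψK, ← algebraMap.coe_smul'] using hg (algebraMap A _ a)

end FractionRing

theorem strMap_agree_iff_differ_by_G_general
    {A : Type*} [CommRing A] [IsDomain A] (G : Subgroup (A ≃+* A))
    (hGfin : (G : Set (A ≃+* A)).Finite)
    (Sg : Set (A →+* A))
    (hinj : ∀ σ ∈ Sg, Function.Injective σ)
    (σ₁ σ₂ : A →+* A) (h₁ : σ₁ ∈ Sg) (h₂ : σ₂ ∈ Sg)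
    (hagree : ∀ b ∈ fixedSubring G, σ₁ b = σ₂ b) :
    ∃ g ∈ G, σ₂ = σ₁.comp ((g : A ≃+* A) : A →+* A) := by
  have : Finite G := hGfin.to_subtype
  obtain ⟨g, hg⟩ := MulSemiringAction.exists_forall_apply_eq_apply_smul_of_injective (G := G)
    (hinj σ₁ h₁) (hinj σ₂ h₂) fun a ha => hagree a fun g hg => ha ⟨g, hg⟩
  exact ⟨g, g.2, RingHom.ext hg⟩

/-- if `G` acts compatibly on a difference ring `(A, Σ)` with `A` an
integral domain and `B = A^G`, then two elements of `Σ` restricting to the same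
endomorphism of `B` differ by an element of `G`; hence `Σ̄ = Σ/G`. -/
theorem strMap_agree_iff_differ_by_G
    {A : Type*} [CommRing A] [IsDomain A] (G : Subgroup (A ≃+* A))
    (hGfin : (G : Set (A ≃+* A)).Finite)
    (Sg : Set (A →+* A))
    (hinj : ∀ σ ∈ Sg, Function.Injective σ)
    (hconj : ∀ σ ∈ Sg, ∀ τ ∈ Sg, ∃ ρ ∈ Sg, (τ : A →+* A).comp ρ = σ.comp τ)
    (hcompat : ∀ g ∈ G, ∀ σ ∈ Sg, ∃ g' ∈ G,
      ((g : A ≃+* A) : A →+* A).comp σ = σ.comp ((g' : A ≃+* A) : A →+* A))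
    (hSgG : ∀ g ∈ G, ∀ σ ∈ Sg, (((g : A ≃+* A) : A →+* A)).comp σ ∈ Sg)
    (σ₁ σ₂ : A →+* A) (h₁ : σ₁ ∈ Sg) (h₂ : σ₂ ∈ Sg)
    (hagree : ∀ b ∈ fixedSubring G, σ₁ b = σ₂ b) :
    ∃ g ∈ G, σ₂ = σ₁.comp ((g : A ≃+* A) : A →+* A) :=
  strMap_agree_iff_differ_by_G_general G hGfin Sg hinj σ₁ σ₂ h₁ h₂ hagree
end

section
/- Frobenius reciprocity for injective morphisms of difference structures: if ψ: Σ ↪ T is an injective morphism of finite difference structures and every map ()^τ: T→T is bijective, then (α, ψ^*β)_Σ = (ψ_*α, β)_T for all central functions α on Σ and β on T, where (α,γ)_Σ = (1/|Σ|)·Σ_{σ∈Σ} α(σ)·conj(γ(σ)). -/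
namespace DiffStr15

/-- A central function on a difference structure `(S, op)`: `α(σ^τ) = α(σ)`. -/
def Central {S : Type*} (op : S → S → S) (α : S → ℂ) : Prop :=
  ∀ σ τ : S, α (op σ τ) = α σ

/-- The inner product of central functions:
`(α, γ) = |S|⁻¹ Σ_σ α(σ) conj(γ(σ))`. -/
noncomputable def innerC {S : Type*} [Fintype S] (α γ : S → ℂ) : ℂ :=
  ((Fintype.card S : ℂ))⁻¹ * ∑ σ : S, α σ * (starRingEnd ℂ) (γ σ)

/-- Pushforward along an injective morphism (identifying `Σ ⊆ T`):
`(ψ_*α)(τ) = |Σ|⁻¹ Σ_{ρ ∈ T, τ^ρ ∈ Σ} α(τ^ρ)`. -/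
noncomputable def pushInj {S T : Type*} [Fintype S] [Fintype T] [DecidableEq T]
    (opT : T → T → T) (ψ : S → T) (α : S → ℂ) : T → ℂ := fun τ =>
  ((Fintype.card S : ℂ))⁻¹ * ∑ ρ : T, ∑ σ : S, if ψ σ = opT τ ρ then α σ else 0

/-- Frobenius reciprocity for an injective morphism `ψ : Σ ↪ T` of
finite difference structures such that every `()^τ : T → T` is bijective:
`(α, ψ^*β)_Σ = (ψ_*α, β)_T`. -/
theorem frobenius_reciprocity_inj
    {S T : Type*} [Fintype S] [Fintype T] [DecidableEq T]
    (opS : S → S → S) (opT : T → T → T)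
    (hS : ∀ σ, opS σ σ = σ) (hT : ∀ τ, opT τ τ = τ)
    (ψ : S → T) (hψ : ∀ σ τ : S, ψ (opS σ τ) = opT (ψ σ) (ψ τ))
    (hinj : Function.Injective ψ)
    (hbij : ∀ τ : T, Function.Bijective fun ρ => opT ρ τ)
    (α : S → ℂ) (β : T → ℂ)
    (hα : Central opS α) (hβ : Central opT β) :
    innerC α (fun σ => β (ψ σ)) = innerC (pushInj opT ψ α) β := by
  classical
  by_cases hTE : IsEmpty T
  · haveI := hTE
    haveI : IsEmpty S := ⟨fun s => hTE.false (ψ s)⟩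
    simp [innerC, pushInj]
  · rw [not_isEmpty_iff] at hTE
    have hTc : (Fintype.card T : ℂ) ≠ 0 := by
      exact_mod_cast Nat.cast_ne_zero.mpr Fintype.card_ne_zero
    unfold innerC pushInj
    have key : ∀ σ : S,
        (∑ τ : T, ∑ ρ : T, (if ψ σ = opT τ ρ then (1:ℂ) else 0))
          = (Fintype.card T : ℂ) := by
      intro σ
      rw [Finset.sum_comm]
      have h1 : ∀ ρ : T, (∑ τ : T, (if ψ σ = opT τ ρ then (1:ℂ) else 0)) = 1 := by
        intro ρ
        rw [Fintype.sum_bijective (fun τ => opT τ ρ) (hbij ρ) _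
          (fun t => if ψ σ = t then (1:ℂ) else 0) (fun τ => rfl)]
        simp
      simp [h1]
    have step1 : ∀ τ : T,
        (((Fintype.card S : ℂ))⁻¹ * ∑ ρ : T, ∑ σ : S,
            if ψ σ = opT τ ρ then α σ else 0) * (starRingEnd ℂ) (β τ)
        = ((Fintype.card S : ℂ))⁻¹ * ∑ ρ : T, ∑ σ : S,
            if ψ σ = opT τ ρ then α σ * (starRingEnd ℂ) (β (ψ σ)) else 0 := by
      intro τ
      rw [mul_assoc, Finset.sum_mul]
      congr 1
      refine Finset.sum_congr rfl fun ρ _ => ?_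
      rw [Finset.sum_mul]
      refine Finset.sum_congr rfl fun σ _ => ?_
      by_cases h : ψ σ = opT τ ρ
      · simp only [h, if_true]
        rw [hβ]
      · simp [h]
    simp only [step1]
    rw [← Finset.mul_sum]
    have swap1 : ∀ τ : T,
        (∑ ρ : T, ∑ σ : S, if ψ σ = opT τ ρ then α σ * (starRingEnd ℂ) (β (ψ σ)) else 0)
        = ∑ σ : S, ∑ ρ : T, if ψ σ = opT τ ρ then α σ * (starRingEnd ℂ) (β (ψ σ)) else 0 :=
      fun τ => Finset.sum_comm
    simp only [swap1]
    rw [Finset.sum_comm]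
    have step2 : (∑ σ : S, ∑ τ : T, ∑ ρ : T,
        if ψ σ = opT τ ρ then α σ * (starRingEnd ℂ) (β (ψ σ)) else 0)
        = (Fintype.card T : ℂ) * ∑ σ : S, α σ * (starRingEnd ℂ) (β (ψ σ)) := by
      rw [Finset.mul_sum]
      refine Finset.sum_congr rfl fun σ _ => ?_
      have : ∀ τ ρ : T, (if ψ σ = opT τ ρ then α σ * (starRingEnd ℂ) (β (ψ σ)) else 0)
          = (α σ * (starRingEnd ℂ) (β (ψ σ))) * (if ψ σ = opT τ ρ then (1:ℂ) else 0) := by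
        intro τ ρ; by_cases h : ψ σ = opT τ ρ <;> simp [h]
      simp only [this, ← Finset.mul_sum, key σ]
      ring
    rw [step2]
    field_simp

end DiffStr15
end

section
/- Base change for central functions: given a Cartesian square of surjective morphisms of finite difference structures π₁: Σ₁×_T Σ₂ → Σ₁, π₂: Σ₁×_T Σ₂ → Σ₂, ψ₁: Σ₁→T, ψ₂: Σ₂→T, and a central function α on Σ₁, one has π_{2*}π₁^*α = ψ₂^*ψ_{1*}α as central functions on Σ₂. -/
namespace DiffStr17

/-- A central function on a difference structure `(S, op)`: `α(σ^τ) = α(σ)`. -/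
def Central {S : Type*} (op : S → S → S) (α : S → ℂ) : Prop :=
  ∀ σ τ : S, α (op σ τ) = α σ

/-- Pushforward along a surjective morphism:
`(ψ_*α)(τ) = |ψ⁻¹(τ)|⁻¹ Σ_{σ ∈ ψ⁻¹(τ)} α(σ)`. -/
noncomputable def pushSurj {S T : Type*} [Fintype S] [DecidableEq T]
    (ψ : S → T) (α : S → ℂ) : T → ℂ := fun τ =>
  ((Finset.univ.filter fun σ => ψ σ = τ).card : ℂ)⁻¹ *
    ∑ σ ∈ Finset.univ.filter fun σ => ψ σ = τ, α σ

/-- base change for central functions: given a Cartesian square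
`P = Σ₁ ×_T Σ₂` of surjective morphisms of finite difference structures and a
central function `α` on `Σ₁`, one has `π₂_* π₁^* α = ψ₂^* ψ₁_* α`. -/
theorem base_change_central
    {P S₁ S₂ T : Type*} [Fintype P] [Fintype S₁] [Fintype S₂] [Fintype T]
    [DecidableEq S₁] [DecidableEq S₂] [DecidableEq T]
    (opP : P → P → P) (op1 : S₁ → S₁ → S₁) (op2 : S₂ → S₂ → S₂) (opT : T → T → T)
    (hP : ∀ p, opP p p = p) (h1 : ∀ s, op1 s s = s)
    (h2 : ∀ s, op2 s s = s) (hT : ∀ t, opT t t = t)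
    (π₁ : P → S₁) (π₂ : P → S₂) (ψ₁ : S₁ → T) (ψ₂ : S₂ → T)
    (hπ₁ : ∀ p q : P, π₁ (opP p q) = op1 (π₁ p) (π₁ q))
    (hπ₂ : ∀ p q : P, π₂ (opP p q) = op2 (π₂ p) (π₂ q))
    (hψ₁ : ∀ s t : S₁, ψ₁ (op1 s t) = opT (ψ₁ s) (ψ₁ t))
    (hψ₂ : ∀ s t : S₂, ψ₂ (op2 s t) = opT (ψ₂ s) (ψ₂ t))
    (hπ₁surj : Function.Surjective π₁) (hπ₂surj : Function.Surjective π₂)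
    (hψ₁surj : Function.Surjective ψ₁) (hψ₂surj : Function.Surjective ψ₂)
    (hcomm : ∀ p : P, ψ₁ (π₁ p) = ψ₂ (π₂ p))
    (hcart_inj : ∀ p q : P, π₁ p = π₁ q → π₂ p = π₂ q → p = q)
    (hcart_surj : ∀ (s₁ : S₁) (s₂ : S₂), ψ₁ s₁ = ψ₂ s₂ →
      ∃ p : P, π₁ p = s₁ ∧ π₂ p = s₂)
    (α : S₁ → ℂ) (hα : Central op1 α) :
    pushSurj π₂ (fun p => α (π₁ p)) = fun s₂ => pushSurj ψ₁ α (ψ₂ s₂) := by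
  funext s₂
  unfold pushSurj
  have hmem : ∀ p ∈ Finset.univ.filter fun p => π₂ p = s₂,
      π₁ p ∈ Finset.univ.filter fun σ => ψ₁ σ = ψ₂ s₂ := by
    intro p hp
    simp only [Finset.mem_filter, Finset.mem_univ, true_and] at hp ⊢
    rw [hcomm, hp]
  have hinj : ∀ p ∈ Finset.univ.filter fun p => π₂ p = s₂,
      ∀ q ∈ Finset.univ.filter fun p => π₂ p = s₂, π₁ p = π₁ q → p = q := by
    intro p hp q hq h
    simp only [Finset.mem_filter, Finset.mem_univ, true_and] at hp hq
    exact hcart_inj p q h (hp.trans hq.symm)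
  have hsurj : ∀ σ ∈ Finset.univ.filter fun σ => ψ₁ σ = ψ₂ s₂,
      ∃ p, ∃ hp : p ∈ Finset.univ.filter fun p => π₂ p = s₂, π₁ p = σ := by
    intro σ hσ
    simp only [Finset.mem_filter, Finset.mem_univ, true_and] at hσ
    obtain ⟨p, h1, h2⟩ := hcart_surj σ s₂ hσ
    exact ⟨p, by simp [h2], h1⟩
  have hcard := Finset.card_bij (fun p _ => π₁ p) hmem hinj hsurj
  have hsum := Finset.sum_bij (i := fun p _ => π₁ p) hmem hinj hsurj
    (fun p _ => rfl) (f := fun p => α (π₁ p)) (g := α)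
  rw [hcard, hsum]

end DiffStr17
end
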